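/- Let H be a subgroup of G. Then ℓ∞(G/H) is amenable if and only if there exists a state m on ℓ∞(G) such that m*ℓ∞(G) ⊆ ℓ∞(G/H) and m(1_H) ≠ 0. -/

import Mathlib

set_option linter.unusedSectionVars false

open scoped ENNReal ComplexOrder

noncomputable section

namespace QG

variable {G : Type*} [Group G]

/-- `ℓ∞(G)`: bounded complex functions on `G`. -/
abbrev Linf (G : Type*) : Type _ := lp (fun _ : G => ℂ) ∞

/-- `ℓ¹(G)`: summable complex functions on `G`. -/
abbrev L1 (G : Type*) : Type _ := lp (fun _ : G => ℂ) 1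

/-- The dual space `ℓ∞(G)*`. -/
abbrev DualLinf (G : Type*) : Type _ := StrongDual ℂ (Linf G)

lemma summable_norm (f : L1 G) : Summable fun s => ‖f s‖ := by
  have h := (lp.memℓp f).summable (by simp)
  simpa using h

lemma norm_apply_le (x : Linf G) (s : G) : ‖x s‖ ≤ ‖x‖ :=
  lp.norm_apply_le_norm ENNReal.top_ne_zero x s

/-- The constant function `1` in `ℓ∞(G)`. -/
def one' : Linf G :=
  ⟨fun _ => (1 : ℂ), memℓp_infty ⟨1, by rintro r ⟨t, rfl⟩; simp⟩⟩

/-- Left translation: `(L_s x)(t) = x (s * t)`. -/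
def Ltrans (s : G) (x : Linf G) : Linf G :=
  ⟨fun t => x (s * t),
    memℓp_infty (BddAbove.mono (by rintro r ⟨t, rfl⟩; exact ⟨s * t, rfl⟩) (lp.memℓp x).bddAbove)⟩

@[simp] lemma Ltrans_apply (s : G) (x : Linf G) (t : G) : Ltrans s x t = x (s * t) := rfl

lemma norm_Ltrans_le (s : G) (x : Linf G) : ‖Ltrans s x‖ ≤ ‖x‖ := by
  rw [lp.norm_eq_ciSup]
  exact ciSup_le fun t => norm_apply_le x (s * t)

/-- The action `m * x` of `m ∈ ℓ∞(G)*` on `x ∈ ℓ∞(G)`: `(m*x)(s) = m (L_s x)`. -/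
def starAct (m : DualLinf G) (x : Linf G) : Linf G :=
  ⟨fun s => m (Ltrans s x),
    memℓp_infty ⟨‖m‖ * ‖x‖, by
      rintro r ⟨s, rfl⟩
      calc ‖m (Ltrans s x)‖ ≤ ‖m‖ * ‖Ltrans s x‖ := m.le_opNorm _
        _ ≤ ‖m‖ * ‖x‖ :=
          mul_le_mul_of_nonneg_left (norm_Ltrans_le s x) (norm_nonneg m)⟩⟩

@[simp] lemma starAct_apply (m : DualLinf G) (x : Linf G) (s : G) :
    starAct m x s = m (Ltrans s x) := rfl

lemma summable_mul_bound (f : L1 G) (x : Linf G) (t : G) :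
    Summable fun s => ‖f s * x (s * t)‖ := by
  refine Summable.of_nonneg_of_le (fun s => norm_nonneg _) (fun s => ?_)
    ((summable_norm f).mul_right ‖x‖)
  rw [norm_mul]
  exact mul_le_mul_of_nonneg_left (norm_apply_le x (s * t)) (norm_nonneg _)

/-- The right action of `ℓ¹(G)` on `ℓ∞(G)`: `(x * f)(t) = ∑_s f s * x (s * t)`. -/
def rAct (x : Linf G) (f : L1 G) : Linf G :=
  ⟨fun t => ∑' s, f s * x (s * t),
    memℓp_infty ⟨(∑' s, ‖f s‖) * ‖x‖, by
      rintro r ⟨t, rfl⟩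
      calc ‖∑' s, f s * x (s * t)‖ ≤ ∑' s, ‖f s * x (s * t)‖ :=
            norm_tsum_le_tsum_norm (summable_mul_bound f x t)
        _ ≤ ∑' s, ‖f s‖ * ‖x‖ :=
            Summable.tsum_le_tsum (fun s => by
                rw [norm_mul]
                exact mul_le_mul_of_nonneg_left (norm_apply_le x (s * t)) (norm_nonneg _))
              (summable_mul_bound f x t) ((summable_norm f).mul_right _)
        _ = (∑' s, ‖f s‖) * ‖x‖ := tsum_mul_right⟩⟩

@[simp] lemma rAct_apply (x : Linf G) (f : L1 G) (t : G) :
    rAct x f t = ∑' s, f s * x (s * t) := rfl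

/-- The shear equivalence of `G × G`. -/
def shearEquiv (G : Type*) [Group G] : G × G ≃ G × G where
  toFun p := (p.2, p.2⁻¹ * p.1)
  invFun p := (p.1 * p.2, p.1)
  left_inv p := by simp
  right_inv p := by simp

lemma conv_prod_summable (f g : L1 G) :
    Summable fun p : G × G => ‖f p.2‖ * ‖g (p.2⁻¹ * p.1)‖ := by
  have h0 : Summable fun p : G × G => ‖f p.1‖ * ‖g p.2‖ :=
    (summable_norm f).mul_of_nonneg (summable_norm g) (fun _ => norm_nonneg _)
      (fun _ => norm_nonneg _)
  have key : Summable ((fun p : G × G => ‖f p.1‖ * ‖g p.2‖) ∘ (shearEquiv G)) :=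
    (shearEquiv G).summable_iff.mpr h0
  have heq : ((fun p : G × G => ‖f p.1‖ * ‖g p.2‖) ∘ (shearEquiv G)) =
      fun p : G × G => ‖f p.2‖ * ‖g (p.2⁻¹ * p.1)‖ := by
    funext p
    simp [shearEquiv, Function.comp]
  rwa [heq] at key

lemma conv_memℓp (f g : L1 G) : Memℓp (fun t : G => ∑' s, f s * g (s⁻¹ * t)) 1 := by
  have hp := conv_prod_summable f g
  obtain ⟨h1, h2⟩ :=
    (summable_prod_of_nonneg (fun p => mul_nonneg (norm_nonneg _) (norm_nonneg _))).1 hp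
  apply memℓp_gen
  simp only [ENNReal.toReal_one, Real.rpow_one]
  refine Summable.of_nonneg_of_le (fun t => norm_nonneg _) (fun t => ?_) h2
  calc ‖∑' s, f s * g (s⁻¹ * t)‖ ≤ ∑' s, ‖f s * g (s⁻¹ * t)‖ :=
        norm_tsum_le_tsum_norm (by simpa only [norm_mul] using h1 t)
    _ = ∑' s, ‖f s‖ * ‖g (s⁻¹ * t)‖ := tsum_congr fun s => norm_mul _ _

/-- Convolution on `ℓ¹(G)`: `(f * g)(t) = ∑_s f s * g (s⁻¹ t)`. -/
def conv (f g : L1 G) : L1 G :=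
  ⟨fun t => ∑' s, f s * g (s⁻¹ * t), conv_memℓp f g⟩

@[simp] lemma conv_apply (f g : L1 G) (t : G) : conv f g t = ∑' s, f s * g (s⁻¹ * t) := rfl

open Classical in
/-- The unit `ε = δ_e` of the convolution algebra `ℓ¹(G)`. -/
def eps : L1 G :=
  ⟨fun t => if t = 1 then 1 else 0, by
    apply memℓp_gen
    refine summable_of_ne_finset_zero (s := ({1} : Finset G)) ?_
    intro t ht
    simp only [Finset.mem_singleton] at ht
    simp [ht]⟩

open Classical in
/-- Multiplication by the indicator function of `H`: `f · 1_H`. -/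
def mulIndic (H : Subgroup G) (f : L1 G) : L1 G :=
  ⟨fun s => if s ∈ H then f s else 0, by
    apply memℓp_gen
    simp only [ENNReal.toReal_one, Real.rpow_one]
    refine Summable.of_nonneg_of_le (fun s => norm_nonneg _) (fun s => ?_) (summable_norm f)
    by_cases h : s ∈ H <;> simp [h]⟩

open Classical in
/-- The indicator function `1_H ∈ ℓ∞(G)` of a subgroup `H`. -/
def indic (H : Subgroup G) : Linf G :=
  ⟨fun s => if s ∈ H then 1 else 0,
    memℓp_infty ⟨1, by rintro r ⟨s, rfl⟩; by_cases h : s ∈ H <;> simp [h]⟩⟩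

/-- A state on `ℓ∞(G)`: unital positive functional. -/
def IsState (m : DualLinf G) : Prop :=
  m one' = 1 ∧ ∀ x : Linf G, (∀ s, 0 ≤ x s) → 0 ≤ m x

/-- `f ∈ Ann_L(m)`, i.e. `f * m = 0`. -/
def memAnnL (m : DualLinf G) (f : L1 G) : Prop :=
  ∀ x : Linf G, ∑' s, f s * m (Ltrans s x) = 0

/-- `f ∈ Inv_L(m, x₀)`, i.e. `f * m = f(x₀) · m`. -/
def memInvLx (m : DualLinf G) (x₀ : Linf G) (f : L1 G) : Prop :=
  ∀ x : Linf G, ∑' s, f s * m (Ltrans s x) = (∑' s, f s * x₀ s) * m x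

/-- `f ∈ Inv_L(m)`, i.e. `f * m = f(1) · m`. -/
def memInvL (m : DualLinf G) (f : L1 G) : Prop :=
  ∀ x : Linf G, ∑' s, f s * m (Ltrans s x) = (∑' s, f s) * m x

/-- A right idempotent state: a state with `m (m * x) = m x` for all `x`. -/
def IsRightIdempotentState (m : DualLinf G) : Prop :=
  IsState m ∧ ∀ x : Linf G, m (starAct m x) = m x

/-- A character of `G` in `ℓ∞(G)`. -/
def IsCharacter (x : Linf G) : Prop :=
  (∀ s t : G, x (s * t) = x s * x t) ∧ ∀ s : G, ‖x s‖ = 1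

/-- `ℓ∞(G/H)`, the right-`H`-invariant elements of `ℓ∞(G)`. -/
def LinfQuot (H : Subgroup G) : Set (Linf G) :=
  {x | ∀ s : G, ∀ h ∈ H, x (s * h) = x s}

/-- `J¹(G,H)`, the preannihilator of `ℓ∞(G/H)` in `ℓ¹(G)`. -/
def J1 (H : Subgroup G) : Set (L1 G) :=
  {f | ∀ x ∈ LinfQuot H, ∑' s, f s * x s = 0}

/-- `E` witnesses relative amenability of `ℓ∞(G/H)`: a unital positive
`ℓ¹(G)`-module map `ℓ∞(G) → ℓ∞(G)` with range inside `ℓ∞(G/H)`. -/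
def IsRelAmenMap (H : Subgroup G) (E : Linf G →ₗ[ℂ] Linf G) : Prop :=
  E one' = one' ∧
  (∀ x : Linf G, (∀ s, 0 ≤ x s) → ∀ s, 0 ≤ E x s) ∧
  (∀ x : Linf G, E x ∈ LinfQuot H) ∧
  (∀ (x : Linf G) (f : L1 G), E (rAct x f) = rAct (E x) f)

/-- `ℓ∞(G/H)` is relatively amenable. -/
def RelAmen (H : Subgroup G) : Prop :=
  ∃ E : Linf G →ₗ[ℂ] Linf G, IsRelAmenMap H E

/-- `ℓ∞(G/H)` is amenable. -/
def Amen (H : Subgroup G) : Prop :=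
  ∃ E : Linf G →ₗ[ℂ] Linf G, IsRelAmenMap H E ∧ ∀ x ∈ LinfQuot H, E x = x

/-- Amenability of a discrete group: existence of a left invariant mean. -/
def GroupAmenable (K : Type*) [Group K] : Prop :=
  ∃ μ : DualLinf K, IsState μ ∧ ∀ (k : K) (y : Linf K), μ (Ltrans k y) = μ y

/-- `H`-invariance of a functional on `ℓ∞(G)`. -/
def HInvariant (H : Subgroup G) (μ : DualLinf G) : Prop :=
  ∀ h ∈ H, ∀ x : Linf G, μ (Ltrans h x) = μ x

/-- `J` has a bounded right approximate identity contained in `S`. -/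
def HasBraiIn (J S : Set (L1 G)) : Prop :=
  ∃ (ι : Type) (l : Filter ι) (e : ι → L1 G), l.NeBot ∧
    (∃ C : ℝ, ∀ i, ‖e i‖ ≤ C) ∧ (∀ i, e i ∈ S) ∧
    ∀ f ∈ J, Filter.Tendsto (fun i => ‖conv f (e i) - f‖) l (nhds 0)

lemma one'_mem_LinfQuot (H : Subgroup G) : (one' : Linf G) ∈ LinfQuot H :=
  fun _ _ _ => rfl

lemma Ltrans_mem_LinfQuot {H : Subgroup G} {x : Linf G} (hx : x ∈ LinfQuot H) (s : G) :
    Ltrans s x ∈ LinfQuot H := by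
  intro t h hh
  show x (s * (t * h)) = x (s * t)
  rw [← mul_assoc]
  exact hx (s * t) h hh

/-- `ℓ∞(G/H)` as a subspace of `ℓ∞(G)`. -/
def LinfQuotSub (H : Subgroup G) : Submodule ℂ (Linf G) where
  carrier := LinfQuot H
  add_mem' := by
    intro a b ha hb s h hh
    show (a + b : Linf G) (s * h) = (a + b : Linf G) s
    rw [lp.coeFn_add]
    simp only [Pi.add_apply]
    rw [ha s h hh, hb s h hh]
  zero_mem' := by
    intro s h hh
    show (0 : Linf G) (s * h) = (0 : Linf G) s
    rw [lp.coeFn_zero]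
    simp
  smul_mem' := by
    intro c a ha s h hh
    show (c • a : Linf G) (s * h) = (c • a : Linf G) s
    rw [lp.coeFn_smul]
    simp only [Pi.smul_apply]
    rw [ha s h hh]

/-- The weak* topology on `ℓ∞(G) = ℓ¹(G)*`: the topology induced by the
pairings against elements of `ℓ¹(G)`. -/
def weakStarTop (G : Type*) [Group G] : TopologicalSpace (Linf G) :=
  TopologicalSpace.induced (fun (y : Linf G) => fun f : L1 G => ∑' s, f s * y s)
    Pi.topologicalSpace

/-!
If `E` is a conditional expectation onto `ℓ∞(G/H)` commuting with the right `ℓ¹(G)`-action,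
then `m x = (E x)(e)` is a positive unital functional, hence bounded, and
`E (L_s x) = E (x * δ_s) = L_s (E x)` gives `m * x = E x`; moreover `m 1_H = 1_H(e) = 1`.

Conversely, `m * ℓ∞(G) ⊆ ℓ∞(G/H)` says exactly that `m` is `H`-invariant, and then so is the
conditioned state `m_H y = m (1_H y) / m 1_H`. Like every `m' * ·`, the map `E x = m_H * x` is
positive and commutes with the `ℓ¹(G)`-action; it lands in `ℓ∞(G/H)` by `H`-invariance of `m_H`,
and it fixes `x ∈ ℓ∞(G/H)` because there `1_H · L_s x = x(s) 1_H`.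
-/

lemma smul_one_apply (c : ℂ) (s : G) : (c • (1 : Linf G)) s = c := by
  rw [lp.coeFn_smul, Pi.smul_apply, lp.infty_coeFn_one, Pi.one_apply, smul_eq_mul, mul_one]

lemma Ltrans_one (x : Linf G) : Ltrans 1 x = x := by
  ext t; simp

lemma Ltrans_mul (s t : G) (x : Linf G) : Ltrans (s * t) x = Ltrans t (Ltrans s x) := by
  ext u; simp [mul_assoc]

lemma Ltrans_add (s : G) (x y : Linf G) : Ltrans s (x + y) = Ltrans s x + Ltrans s y := by
  ext t; simp

lemma Ltrans_smul (s : G) (c : ℂ) (x : Linf G) : Ltrans s (c • x) = c • Ltrans s x := by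
  ext t; simp

open Classical in
lemma rAct_single (x : Linf G) (s : G) : rAct x (lp.single 1 s 1) = Ltrans s x := by
  ext t
  rw [rAct_apply, tsum_eq_single s fun u hu => by simp [lp.single_apply, hu]]
  simp [lp.single_apply]

lemma hasSum_Ltrans_rAct (x : Linf G) (f : L1 G) (t : G) :
    HasSum (fun u => f u • Ltrans (u * t) x) (Ltrans t (rAct x f)) := by
  have hsum : Summable fun u => f u • Ltrans (u * t) x := by
    refine .of_norm_bounded ((summable_norm f).mul_right ‖x‖) fun u => ?_
    rw [norm_smul]
    exact mul_le_mul_of_nonneg_left (norm_Ltrans_le _ x) (norm_nonneg _)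
  convert hsum.hasSum
  ext g
  have h := hsum.hasSum.mapL (lp.evalCLM ℂ _ ∞ g)
  refine HasSum.unique ?_ h
  simpa [mul_assoc, lp.evalCLM] using (summable_mul_bound f x (t * g)).of_norm.hasSum

open Classical in
@[simp] lemma indic_apply (H : Subgroup G) (s : G) : indic H s = if s ∈ H then 1 else 0 := rfl

lemma indic_nonneg (H : Subgroup G) (s : G) : 0 ≤ indic H s := by
  classical
  simp only [indic_apply]
  split_ifs <;> simp

lemma indic_mem_LinfQuot (H : Subgroup G) : indic H ∈ LinfQuot H := fun s h hh => by
  classical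
  simp [H.mul_mem_cancel_right hh]

lemma indic_mul_Ltrans {H : Subgroup G} {h : G} (hh : h ∈ H) (y : Linf G) :
    indic H * Ltrans h y = Ltrans h (indic H * y) := by
  classical
  ext t
  simp [H.mul_mem_cancel_left hh]

lemma indic_mul_Ltrans_of_mem_LinfQuot {H : Subgroup G} {x : Linf G} (hx : x ∈ LinfQuot H)
    (s : G) : indic H * Ltrans s x = x s • indic H := by
  classical
  ext t
  by_cases ht : t ∈ H <;> simp [ht, hx s t]

def starActₗ (m : DualLinf G) : Linf G →ₗ[ℂ] Linf G where
  toFun := starAct m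
  map_add' x y := by ext s; simp [Ltrans_add]
  map_smul' c x := by ext s; simp [Ltrans_smul]

lemma starAct_rAct (m : DualLinf G) (x : Linf G) (f : L1 G) :
    starAct m (rAct x f) = rAct (starAct m x) f := by
  ext t
  simpa using ((hasSum_Ltrans_rAct x f t).mapL m).tsum_eq.symm

lemma starAct_nonneg {m : DualLinf G} (hm : ∀ y : Linf G, (∀ s, 0 ≤ y s) → 0 ≤ m y)
    {x : Linf G} (hx : ∀ s, 0 ≤ x s) (s : G) : 0 ≤ starAct m x s :=
  hm _ fun t => hx (s * t)

lemma forall_starAct_mem_LinfQuot_iff {H : Subgroup G} {m : DualLinf G} :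
    (∀ x, starAct m x ∈ LinfQuot H) ↔ HInvariant H m := by
  refine ⟨fun hm h hh x => ?_, fun hm x s h hh => ?_⟩
  · simpa [Ltrans_one] using hm x 1 h hh
  · simpa [Ltrans_mul] using hm h hh (Ltrans s x)

lemma starAct_eq_of_rAct_comm {E : Linf G →ₗ[ℂ] Linf G}
    (hE : ∀ x f, E (rAct x f) = rAct (E x) f) {m : DualLinf G} (hm : ∀ x, m x = E x 1)
    (x : Linf G) : starAct m x = E x := by
  classical
  ext s
  rw [starAct_apply, hm, ← rAct_single, hE, rAct_single, Ltrans_apply, mul_one]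

lemma _root_.Complex.neg_ofReal_le_and_le_ofReal_iff {z : ℂ} {r : ℝ} :
    (-(r : ℂ) ≤ z ∧ z ≤ r) ↔ z.im = 0 ∧ ‖z‖ ≤ r := by
  simp only [Complex.le_def, Complex.neg_re, Complex.ofReal_re, Complex.neg_im,
    Complex.ofReal_im, neg_zero]
  constructor
  · rintro ⟨⟨h₁, -⟩, h₂, him⟩
    rw [← Complex.re_add_im z, him]
    simpa [abs_le] using ⟨h₁, h₂⟩
  · rintro ⟨him, h⟩
    obtain ⟨h₁, h₂⟩ := abs_le.mp ((Complex.abs_re_le_norm z).trans h)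
    exact ⟨⟨h₁, him.symm⟩, h₂, him⟩

lemma norm_apply_le_of_isSelfAdjoint {φ : Linf G →ₗ[ℂ] ℂ}
    (hφ : ∀ x : Linf G, (∀ s, 0 ≤ x s) → 0 ≤ φ x) {y : Linf G} (hy : IsSelfAdjoint y) :
    ‖φ y‖ ≤ ‖φ 1‖ * ‖y‖ := by
  have hmono : ∀ a b : Linf G, (∀ s, a s ≤ b s) → φ a ≤ φ b := fun a b hab => by
    simpa using hφ (b - a) fun s => by simpa using hab s
  have hφ1 : φ 1 = ‖φ 1‖ := Complex.eq_coe_norm_of_nonneg (hφ 1 fun s => by simp)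
  have hy_le : ∀ s, -(‖y‖ : ℂ) ≤ y s ∧ y s ≤ ‖y‖ := fun s =>
    Complex.neg_ofReal_le_and_le_ofReal_iff.2
      ⟨Complex.conj_eq_iff_im.mp (by simpa using congr_fun (congr_arg (⇑) hy) s),
        norm_apply_le y s⟩
  have hlow := hmono (-(‖y‖ : ℂ) • 1) y fun s => by rw [smul_one_apply]; exact (hy_le s).1
  have hupp := hmono y ((‖y‖ : ℂ) • 1) fun s => by rw [smul_one_apply]; exact (hy_le s).2
  rw [map_smul, hφ1, smul_eq_mul] at hlow hupp
  refine (Complex.neg_ofReal_le_and_le_ofReal_iff.1 ⟨?_, ?_⟩).2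
  · push_cast
    linear_combination hlow
  · push_cast
    linear_combination hupp

lemma norm_apply_le_two_mul {φ : Linf G →ₗ[ℂ] ℂ}
    (hφ : ∀ x : Linf G, (∀ s, 0 ≤ x s) → 0 ≤ φ x) (x : Linf G) :
    ‖φ x‖ ≤ 2 * ‖φ 1‖ * ‖x‖ := by
  have hre := norm_apply_le_of_isSelfAdjoint hφ (realPart x).prop
  have him := norm_apply_le_of_isSelfAdjoint hφ (imaginaryPart x).prop
  calc ‖φ x‖ = ‖φ (realPart x) + Complex.I • φ (imaginaryPart x)‖ := by
        rw [← map_smul, ← map_add, realPart_add_I_smul_imaginaryPart]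
    _ ≤ ‖φ 1‖ * ‖realPart x‖ + ‖φ 1‖ * ‖imaginaryPart x‖ := by
        refine (norm_add_le _ _).trans (add_le_add hre ?_)
        rwa [norm_smul, Complex.norm_I, one_mul]
    _ ≤ 2 * ‖φ 1‖ * ‖x‖ := by
        have := mul_le_mul_of_nonneg_left (realPart.norm_le x) (norm_nonneg (φ 1))
        have := mul_le_mul_of_nonneg_left (imaginaryPart.norm_le x) (norm_nonneg (φ 1))
        linarith

def dualOfNonneg (φ : Linf G →ₗ[ℂ] ℂ) (hφ : ∀ x : Linf G, (∀ s, 0 ≤ x s) → 0 ≤ φ x) :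
    DualLinf G :=
  φ.mkContinuous (2 * ‖φ 1‖) (norm_apply_le_two_mul hφ)

theorem Amen.exists_state {H : Subgroup G} (hA : Amen H) :
    ∃ m : DualLinf G, IsState m ∧ (∀ x : Linf G, starAct m x ∈ LinfQuot H) ∧
      m (indic H) ≠ 0 := by
  obtain ⟨E, ⟨hone, hpos, hquot, hmod⟩, hfix⟩ := hA
  set φ := (lp.evalCLM ℂ _ ∞ 1).toLinearMap.comp E
  have hφ : ∀ x : Linf G, (∀ s, 0 ≤ x s) → 0 ≤ φ x := fun x hx => hpos x hx 1
  have hstar := starAct_eq_of_rAct_comm hmod (m := dualOfNonneg φ hφ) fun _ => rfl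
  refine ⟨dualOfNonneg φ hφ, ⟨?_, hφ⟩, fun x => hstar x ▸ hquot x, ?_⟩
  · show E one' 1 = 1
    rw [hone]
    rfl
  · show E (indic H) 1 ≠ 0
    simp [hfix _ (indic_mem_LinfQuot H)]

def condState (H : Subgroup G) (m : DualLinf G) : DualLinf G :=
  (m (indic H))⁻¹ • m.comp (ContinuousLinearMap.mul ℂ (Linf G) (indic H))

lemma condState_apply (H : Subgroup G) (m : DualLinf G) (y : Linf G) :
    condState H m y = (m (indic H))⁻¹ * m (indic H * y) := rfl

lemma HInvariant.condState {H : Subgroup G} {m : DualLinf G} (hm : HInvariant H m) :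
    HInvariant H (condState H m) := fun h hh y => by
  rw [condState_apply, condState_apply, indic_mul_Ltrans hh, hm h hh]

lemma condState_nonneg {H : Subgroup G} {m : DualLinf G}
    (hm : ∀ y : Linf G, (∀ s, 0 ≤ y s) → 0 ≤ m y) {y : Linf G} (hy : ∀ s, 0 ≤ y s) :
    0 ≤ condState H m y := by
  rw [condState_apply]
  refine mul_nonneg (inv_nonneg.mpr (hm _ (indic_nonneg H))) (hm _ fun s => ?_)
  simpa using mul_nonneg (indic_nonneg H s) (hy s)

lemma starAct_condState_of_mem_LinfQuot {H : Subgroup G} {m : DualLinf G}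
    (hne : m (indic H) ≠ 0) {x : Linf G} (hx : x ∈ LinfQuot H) : starAct (condState H m) x = x := by
  ext s
  rw [starAct_apply, condState_apply, indic_mul_Ltrans_of_mem_LinfQuot hx, map_smul, smul_eq_mul,
    mul_left_comm, inv_mul_cancel₀ hne, mul_one]

theorem amen_of_state {H : Subgroup G} {m : DualLinf G}
    (hm : ∀ y : Linf G, (∀ s, 0 ≤ y s) → 0 ≤ m y) (hstar : ∀ x : Linf G, starAct m x ∈ LinfQuot H)
    (hne : m (indic H) ≠ 0) : Amen H := by
  have hinv := (forall_starAct_mem_LinfQuot_iff.mp hstar).condState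
  refine ⟨starActₗ (condState H m), ⟨?_, ?_, ?_, ?_⟩,
    fun x hx => starAct_condState_of_mem_LinfQuot hne hx⟩
  · exact starAct_condState_of_mem_LinfQuot hne (one'_mem_LinfQuot H)
  · exact fun x hx => starAct_nonneg (fun _ => condState_nonneg hm) hx
  · exact forall_starAct_mem_LinfQuot_iff.mpr hinv
  · exact starAct_rAct _

/-- `ℓ∞(G/H)` is amenable iff there is a state `m` with
`m * ℓ∞(G) ⊆ ℓ∞(G/H)` and `m(1_H) ≠ 0`. -/
theorem statement7 (H : Subgroup G) :
    Amen H ↔ ∃ m : DualLinf G, IsState m ∧ (∀ x : Linf G, starAct m x ∈ LinfQuot H) ∧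
      m (indic H) ≠ 0 :=
  ⟨Amen.exists_state, fun ⟨_, hm, hstar, hne⟩ => amen_of_state hm.2 hstar hne⟩

end QG
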